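/- arXiv:1504.07788 — 5 statements merged into one kernel-verified Lean document; each statement's English description precedes it below -/
import Mathlib

section
/- Every element g of the free abelian monoid ℕ^n admits a unique decomposition s_1|…|s_p with s_1, …, s_p in S_n such that s_p ≠ 1 and, for every i < p and every s in S_n, if s_i ≺ s then s does not divide the product s_i s_{i+1} ⋯ s_p. -/
/-!
The greedy decomposition is forced: in a normal form `s_1|…|s_p` of `g`, the first entry lies
below `g` and in `S_n`, and the maximality condition at `i = 1` makes it the largest such element,
`g ⊓ 1` (the indicator of the support of `g`). Removing it leaves a normal form of `g - g ⊓ 1`, so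
existence and uniqueness follow together by well-founded induction on `g`.
-/

variable {ι : Type*}

lemma Pi.inf_one_eq_zero_iff {g : ι → ℕ} : g ⊓ 1 = 0 ↔ g = 0 := by
  simp only [funext_iff, Pi.inf_apply, Pi.one_apply, Pi.zero_apply]
  exact forall_congr' fun k => by omega

/-- `ℕ^ι` is written additively here: its identity is `0`, and `≼` is the pointwise order `≤`. -/
def IsGreedyNormalForm (L : List (ι → ℕ)) : Prop :=
  (∀ s ∈ L, s ≤ 1) ∧ L.getLast? ≠ some 0 ∧
    ∀ i, i + 1 < L.length → ∀ s ≤ 1, L.getD i 0 < s → ¬ s ≤ (L.drop i).sum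

lemma isGreedyNormalForm_nil : IsGreedyNormalForm ([] : List (ι → ℕ)) := by
  simp [IsGreedyNormalForm]

section

variable {L T : List (ι → ℕ)} {a : ι → ℕ}

lemma IsGreedyNormalForm.eq_nil_of_sum_eq_zero (hL : IsGreedyNormalForm L) (hsum : L.sum = 0) :
    L = [] := by
  by_contra hne
  have hlast : L.getLast hne = 0 :=
    le_antisymm (hsum ▸ List.le_sum_of_mem (L.getLast_mem hne)) zero_le
  exact hL.2.1 (by rw [List.getLast?_eq_some_getLast hne, hlast])

lemma IsGreedyNormalForm.of_cons (h : IsGreedyNormalForm (a :: T)) : IsGreedyNormalForm T := by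
  obtain ⟨hS, hlast, hmax⟩ := h
  refine ⟨fun s hs => hS s (List.mem_cons_of_mem a hs), ?_,
    fun i hi s hs hlt => hmax (i + 1) (by simpa using hi) s hs (by simpa using hlt)⟩
  cases T with
  | nil => simp
  | cons b T => rwa [← List.getLast?_cons_cons (a := a)]

lemma IsGreedyNormalForm.head_eq (h : IsGreedyNormalForm (a :: T)) : a = (a + T.sum) ⊓ 1 := by
  obtain ⟨hS, -, hmax⟩ := h
  rcases eq_or_ne T [] with rfl | hne
  · simpa using hS a List.mem_cons_self
  have hle : a ≤ (a + T.sum) ⊓ 1 := le_inf le_self_add (hS a List.mem_cons_self)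
  by_contra hne_inf
  exact hmax 0 (by simpa using List.length_pos_iff.2 hne) _ inf_le_right
    (by simpa using hle.lt_of_ne hne_inf) (by simp)

theorem isGreedyNormalForm_cons_iff :
    IsGreedyNormalForm (a :: T) ↔ a ≠ 0 ∧ a = (a + T.sum) ⊓ 1 ∧ IsGreedyNormalForm T := by
  refine ⟨fun h => ⟨fun ha => ?_, h.head_eq, h.of_cons⟩, fun ⟨ha0, ha, hT⟩ => ?_⟩
  · have hsum : T.sum ⊓ 1 = 0 := by simpa [ha] using h.head_eq.symm
    exact List.cons_ne_nil _ _ <| h.eq_nil_of_sum_eq_zero <| by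
      rw [List.sum_cons, ha, zero_add, ← Pi.inf_one_eq_zero_iff, hsum]
  refine ⟨List.forall_mem_cons.2 ⟨by rw [ha]; exact inf_le_right, hT.1⟩, ?_, ?_⟩
  · cases T with
    | nil => simp [ha0]
    | cons b T => rw [List.getLast?_cons_cons]; exact hT.2.1
  · rintro (_ | i) hi s hs hlt hle
    · simp only [List.getD_cons_zero, List.drop_zero, List.sum_cons] at hlt hle
      exact hlt.not_ge (by rw [ha]; exact le_inf hle hs)
    · exact hT.2.2 i (by simpa using hi) s hs (by simpa using hlt) (by simpa using hle)

end

theorem existsUnique_isGreedyNormalForm_sum_eq [Finite ι] (g : ι → ℕ) :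
    ∃! L, IsGreedyNormalForm L ∧ L.sum = g := by
  induction g using WellFoundedLT.induction with
  | _ g ih =>
  rcases eq_or_ne g 0 with rfl | hg
  · exact ⟨[], ⟨isGreedyNormalForm_nil, rfl⟩, fun L hL => hL.1.eq_nil_of_sum_eq_zero hL.2⟩
  set a := g ⊓ 1
  have ha : a ≠ 0 := Pi.inf_one_eq_zero_iff.not.mpr hg
  have hag : a + (g - a) = g := add_tsub_cancel_of_le inf_le_left
  have hlt : g - a < g := tsub_le_self.lt_of_ne fun h => ha (by simpa [h] using hag)
  obtain ⟨T, ⟨hT, hTsum⟩, huniq⟩ := ih (g - a) hlt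
  refine ⟨a :: T, ⟨isGreedyNormalForm_cons_iff.2 ⟨ha, by rw [hTsum, hag], hT⟩, ?_⟩, ?_⟩
  · rw [List.sum_cons, hTsum, hag]
  rintro (_ | ⟨b, T'⟩) ⟨hL, hLsum⟩
  · exact absurd hLsum.symm hg
  obtain ⟨-, hb, hT'⟩ := isGreedyNormalForm_cons_iff.1 hL
  rw [List.sum_cons] at hLsum
  obtain rfl : b = a := by rw [hb, hLsum]
  rw [huniq T' ⟨hT', eq_tsub_of_add_eq ((add_comm _ _).trans hLsum)⟩]

/-- Every element `g` of the free abelian monoid `ℕ^n` (written here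
additively, with identity `0`) admits a unique decomposition `s_1|…|s_p` with entries in
`S_n = {s | ∀ k, s k ≤ 1}` such that `s_p ≠ 0` and, for every `i < p` and every `s ∈ S_n`,
if `s_i ≺ s` then `s` does not divide `s_i + s_{i+1} + ⋯ + s_p`. -/
theorem freeAbelianMonoid_greedy_normal_form (n : ℕ) (g : Fin n → ℕ) :
    ∃! L : List (Fin n → ℕ),
      (∀ s ∈ L, ∀ k, s k ≤ 1) ∧
      L.getLast? ≠ some 0 ∧
      L.sum = g ∧
      (∀ i : ℕ, i + 1 < L.length → ∀ s : Fin n → ℕ, (∀ k, s k ≤ 1) →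
        (∀ k, L.getD i 0 k ≤ s k) → L.getD i 0 ≠ s →
        ¬ (∀ k, s k ≤ (L.drop i).sum k)) := by
  refine (existsUnique_congr fun L => ?_).1 (existsUnique_isGreedyNormalForm_sum_eq g)
  simp only [IsGreedyNormalForm, lt_iff_le_and_ne]
  exact ⟨fun ⟨⟨h1, h2, h4⟩, h3⟩ => ⟨h1, h2, h3, fun i hi s hs hle hne => h4 i hi s hs ⟨hle, hne⟩⟩,
    fun ⟨h1, h2, h3, h4⟩ => ⟨⟨h1, h2, fun i hi s hs h => h4 i hi s hs h.1 h.2⟩, h3⟩⟩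
end

section
/- If (M, Δ) is a Garside monoid, then every element of M admits a unique strict Δ-normal decomposition, i.e., a unique strict Δ-normal word s_1|…|s_p with s_1 ⋯ s_p = g (the empty word for g = 1). -/
/-- Left-divisibility: `f ≼ g` iff `f * c = g` for some `c`. -/
def LDvd {M : Type*} [Monoid M] (f g : M) : Prop := ∃ c, f * c = g

/-- Right-divisibility: `f` right-divides `g` iff `c * f = g` for some `c`. -/
def RDvd {M : Type*} [Monoid M] (f g : M) : Prop := ∃ c, c * f = g

/-- A Garside monoid: a cancellative monoid `M` together with a Garside element `Δ`,
satisfying conditions (i)–(iv) of the definition. -/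
structure GarsideMonoid (M : Type*) [Monoid M] where
  /-- The Garside element. -/
  Δ : M
  mul_left_cancel : ∀ a b c : M, a * b = a * c → b = c
  mul_right_cancel : ∀ a b c : M, b * a = c * a → b = c
  /-- (i) a superadditive length-type map. -/
  lam : M → ℕ
  lam_superadd : ∀ f g : M, lam f + lam g ≤ lam (f * g)
  lam_ne_zero : ∀ g : M, g ≠ 1 → lam g ≠ 0
  /-- (ii) any two elements admit a left-gcd. -/
  exists_left_gcd : ∀ f g : M, ∃ d, LDvd d f ∧ LDvd d g ∧ ∀ e, LDvd e f → LDvd e g → LDvd e d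
  /-- (ii) any two elements admit a right-lcm. -/
  exists_right_lcm : ∀ f g : M, ∃ m, LDvd f m ∧ LDvd g m ∧ ∀ e, LDvd f e → LDvd g e → LDvd m e
  /-- (ii) any two elements admit a right-gcd. -/
  exists_right_gcd : ∀ f g : M, ∃ d, RDvd d f ∧ RDvd d g ∧ ∀ e, RDvd e f → RDvd e g → RDvd e d
  /-- (ii) any two elements admit a left-lcm. -/
  exists_left_lcm : ∀ f g : M, ∃ m, RDvd f m ∧ RDvd g m ∧ ∀ e, RDvd f e → RDvd g e → RDvd m e
  /-- (iii) the left- and right-divisors of `Δ` coincide. -/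
  ldvd_iff_rdvd : ∀ d : M, LDvd d Δ ↔ RDvd d Δ
  /-- (iii) the divisors of `Δ` generate `M`. -/
  closure_div : Submonoid.closure {d : M | LDvd d Δ} = ⊤
  /-- (iv) `Div(Δ)` is finite. -/
  div_finite : {d : M | LDvd d Δ}.Finite

/-- A word `s_1|…|s_p` (with entries in `Div(Δ)`) is `Δ`-normal if, for every `i < p` and
every `s ∈ Div(Δ)`, `s_i ≺ s` implies that `s` does not left-divide `s_i s_{i+1} ⋯ s_p`. -/
def DNormal {M : Type*} [Monoid M] (G : GarsideMonoid M) (L : List M) : Prop :=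
  ∀ i : ℕ, i + 1 < L.length → ∀ s : M, LDvd s G.Δ →
    LDvd (L.getD i 1) s → L.getD i 1 ≠ s → ¬ LDvd s ((L.drop i).prod)

/-!
The first letter of a normal decomposition of `g` is forced: it is the head of `g`, the greatest
divisor of `Δ` left-dividing `g`. Indeed, if `s ∈ Div(Δ)` left-divides `s₁ ⋯ s_p`, then so does the
right-lcm `u` of `s₁` and `s`, which still divides `Δ`; normality forbids `s₁ ≺ u`, so `s ≼ u = s₁`.
Conversely, prepending the head to a normal decomposition of the remaining factor keeps it normal.
The head of `g ≠ 1` is nontrivial because `Div(Δ)` generates `M`, so `λ` strictly decreases when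
the head is split off; existence and uniqueness then follow by induction, using cancellation.
-/

section

variable {M : Type*} [Monoid M]

theorem ldvd_refl (a : M) : LDvd a a := ⟨1, mul_one a⟩

theorem ldvd_mul_right (a b : M) : LDvd a (a * b) := ⟨b, rfl⟩

theorem LDvd.trans {a b c : M} (hab : LDvd a b) (hbc : LDvd b c) : LDvd a c := by
  obtain ⟨u, rfl⟩ := hab
  obtain ⟨v, rfl⟩ := hbc
  exact ⟨u * v, (mul_assoc _ _ _).symm⟩

namespace GarsideMonoid

theorem lam_one (G : GarsideMonoid M) : G.lam 1 = 0 := by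
  have := G.lam_superadd 1 1
  rw [mul_one] at this
  omega

theorem lam_lt_lam_mul (G : GarsideMonoid M) {a : M} (ha : a ≠ 1) (b : M) : G.lam b < G.lam (a * b) := by
  have := G.lam_superadd a b
  have := G.lam_ne_zero a ha
  omega

theorem eq_one_of_mul_eq_one_left (G : GarsideMonoid M) {a b : M} (h : a * b = 1) : a = 1 := by
  by_contra ha
  have := G.lam_superadd a b
  rw [h, G.lam_one] at this
  exact G.lam_ne_zero a ha (by omega)

theorem eq_one_of_mul_eq_one_right (G : GarsideMonoid M) {a b : M} (h : a * b = 1) : b = 1 := by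
  by_contra hb
  have := G.lam_superadd a b
  rw [h, G.lam_one] at this
  exact G.lam_ne_zero b hb (by omega)

theorem ldvd_antisymm (G : GarsideMonoid M) {a b : M} (hab : LDvd a b) (hba : LDvd b a) : a = b := by
  obtain ⟨u, rfl⟩ := hab
  obtain ⟨v, hv⟩ := hba
  have huv : u * v = 1 := G.mul_left_cancel a _ _ (by rw [← mul_assoc, hv, mul_one])
  rw [G.eq_one_of_mul_eq_one_left huv, mul_one]

variable (G : GarsideMonoid M)

theorem exists_ldvd_delta_ne_one {g : M} (hg : g ≠ 1) :
    ∃ d, LDvd d G.Δ ∧ d ≠ 1 ∧ LDvd d g := by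
  have key : ∀ x ∈ Submonoid.closure {d : M | LDvd d G.Δ},
      x = 1 ∨ ∃ d, LDvd d G.Δ ∧ d ≠ 1 ∧ LDvd d x := by
    intro x hx
    induction hx using Submonoid.closure_induction with
    | mem d hd => exact (em (d = 1)).imp id fun hd1 => ⟨d, hd, hd1, ldvd_refl d⟩
    | one => exact Or.inl rfl
    | mul x y _ _ hx hy =>
      rcases hx with rfl | ⟨d, hdΔ, hd1, hdx⟩
      · simpa using hy
      · exact Or.inr ⟨d, hdΔ, hd1, hdx.trans (ldvd_mul_right x y)⟩
  simpa [hg] using key g (G.closure_div ▸ Submonoid.mem_top g)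

/-- `h` is the head of `g`, i.e. the left-gcd of `g` and `Δ`. -/
def IsHead (g h : M) : Prop :=
  LDvd h G.Δ ∧ LDvd h g ∧ ∀ s, LDvd s G.Δ → LDvd s g → LDvd s h

theorem exists_isHead (g : M) : ∃ h, G.IsHead g h := by
  obtain ⟨d, hdg, hdΔ, hmax⟩ := G.exists_left_gcd g G.Δ
  exact ⟨d, hdΔ, hdg, fun s hsΔ hsg => hmax s hsg hsΔ⟩

variable {G}

theorem IsHead.unique {g h h' : M} (hh : G.IsHead g h) (hh' : G.IsHead g h') : h = h' :=
  G.ldvd_antisymm (hh'.2.2 h hh.1 hh.2.1) (hh.2.2 h' hh'.1 hh'.2.1)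

theorem IsHead.ne_one {g h : M} (hh : G.IsHead g h) (hg : g ≠ 1) : h ≠ 1 := by
  rintro rfl
  obtain ⟨d, hdΔ, hd1, hdg⟩ := G.exists_ldvd_delta_ne_one hg
  obtain ⟨c, hc⟩ := hh.2.2 d hdΔ hdg
  exact hd1 (G.eq_one_of_mul_eq_one_left hc)

variable (G)

theorem dNormal_cons_iff {a : M} {T : List M} (ha : LDvd a G.Δ) :
    DNormal G (a :: T) ↔ DNormal G T ∧ G.IsHead (a * T.prod) a := by
  constructor
  · intro hN
    refine ⟨fun i hi s hs h1 h2 => ?_, ha, ldvd_mul_right a T.prod, fun s hs hsg => ?_⟩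
    · exact hN (i + 1) (by simpa using hi) s hs (by simpa using h1) (by simpa using h2)
    cases T with
    | nil => simpa using hsg
    | cons b T =>
      obtain ⟨u, hau, hsu, hmin⟩ := G.exists_right_lcm a s
      have hua : a = u := by
        by_contra hne
        exact hN 0 (by simp) u (hmin _ ha hs) (by simpa using hau) (by simpa using hne)
          (by simpa using hmin _ (ldvd_mul_right _ _) hsg)
      exact hua ▸ hsu
  · rintro ⟨hT, -, -, hmax⟩ i hi s hs h1 h2
    cases i with
    | zero =>
      simp only [List.getD_cons_zero, List.drop_zero, List.prod_cons] at h1 h2 ⊢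
      exact fun hsg => h2 (G.ldvd_antisymm h1 (hmax s hs hsg))
    | succ j =>
      simpa using hT j (by simpa using hi) s hs (by simpa using h1) (by simpa using h2)

def IsStrictNormalDecomp (g : M) (L : List M) : Prop :=
  (∀ x ∈ L, LDvd x G.Δ) ∧ DNormal G L ∧ L.getLast? ≠ some 1 ∧ L.prod = g

theorem isStrictNormalDecomp_nil : G.IsStrictNormalDecomp 1 [] :=
  ⟨by simp, fun i hi => by simp at hi, by simp, rfl⟩

variable {G}

theorem IsStrictNormalDecomp.eq_nil_of_eq_one {L : List M} (hL : G.IsStrictNormalDecomp 1 L) :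
    L = [] := by
  obtain ⟨-, -, hlast, hprod⟩ := hL
  rcases L.eq_nil_or_concat' with rfl | ⟨L', x, rfl⟩
  · rfl
  · rw [List.prod_append, List.prod_singleton] at hprod
    simp [G.eq_one_of_mul_eq_one_right hprod] at hlast

theorem IsStrictNormalDecomp.cons {a g : M} {T : List M} (hhead : G.IsHead (a * g) a)
    (ha : a ≠ 1) (hT : G.IsStrictNormalDecomp g T) : G.IsStrictNormalDecomp (a * g) (a :: T) := by
  obtain ⟨hTΔ, hTN, hTlast, rfl⟩ := hT
  refine ⟨List.forall_mem_cons.2 ⟨hhead.1, hTΔ⟩, (G.dNormal_cons_iff hhead.1).2 ⟨hTN, hhead⟩,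
    ?_, List.prod_cons⟩
  cases T with
  | nil => simpa using ha
  | cons b T => rwa [List.getLast?_cons_cons]

theorem IsStrictNormalDecomp.of_cons {a g : M} {T : List M}
    (h : G.IsStrictNormalDecomp g (a :: T)) :
    G.IsHead g a ∧ G.IsStrictNormalDecomp T.prod T := by
  obtain ⟨hΔ, hN, hlast, rfl⟩ := h
  rw [List.forall_mem_cons] at hΔ
  obtain ⟨hT, hhead⟩ := (G.dNormal_cons_iff hΔ.1).1 hN
  refine ⟨by simpa using hhead, hΔ.2, hT, ?_, rfl⟩
  cases T with
  | nil => simp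
  | cons b T => rwa [List.getLast?_cons_cons] at hlast

theorem IsStrictNormalDecomp.unique :
    ∀ {g : M} {L L' : List M}, G.IsStrictNormalDecomp g L → G.IsStrictNormalDecomp g L' → L = L'
  | _, [], _, ⟨_, _, _, rfl⟩, hL' => hL'.eq_nil_of_eq_one.symm
  | _, _ :: _, [], hL, ⟨_, _, _, rfl⟩ => hL.eq_nil_of_eq_one
  | g, a :: T, b :: T', hL, hL' => by
    obtain ⟨ha, hT⟩ := hL.of_cons
    obtain ⟨hb, hT'⟩ := hL'.of_cons
    obtain rfl : a = b := ha.unique hb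
    have hprod : T.prod = T'.prod :=
      G.mul_left_cancel a _ _ (by rw [← List.prod_cons, ← List.prod_cons, hL.2.2.2, hL'.2.2.2])
    rw [hT.unique (hprod ▸ hT')]

variable (G)

theorem exists_isStrictNormalDecomp (g : M) : ∃ L, G.IsStrictNormalDecomp g L := by
  by_cases hg : g = 1
  · exact ⟨[], hg ▸ G.isStrictNormalDecomp_nil⟩
  obtain ⟨h, hhead⟩ := G.exists_isHead g
  obtain ⟨g', hg'⟩ := hhead.2.1
  have hh : h ≠ 1 := hhead.ne_one hg
  have : G.lam g' < G.lam g := hg' ▸ G.lam_lt_lam_mul hh g'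
  obtain ⟨T, hT⟩ := exists_isStrictNormalDecomp g'
  exact ⟨h :: T, hg' ▸ hT.cons (hg' ▸ hhead) hh⟩
termination_by G.lam g

end GarsideMonoid

end

/-- In a Garside monoid `(M, Δ)`, every element admits a unique strict
`Δ`-normal decomposition (the empty word for `g = 1`). -/
theorem garsideMonoid_unique_deltaNormal {M : Type*} [Monoid M] (G : GarsideMonoid M)
    (g : M) :
    ∃! L : List M,
      (∀ x ∈ L, LDvd x G.Δ) ∧ DNormal G L ∧ L.getLast? ≠ some 1 ∧ L.prod = g := by
  obtain ⟨L, hL⟩ := G.exists_isStrictNormalDecomp g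
  exact ⟨L, hL, fun _ hL' => GarsideMonoid.IsStrictNormalDecomp.unique hL' hL⟩
end

section
/- If M is a left-cancellative monoid whose only invertible element is 1 and S is a subset of M, then every element of M admits at most one strict S-normal decomposition. -/
/-- An `S`-word `s_1|…|s_p` is `S`-normal if, for every `i < p`, every `s ∈ S` and every
`f ∈ M`, `s ≼ f s_i s_{i+1}` implies `s ≼ f s_i`. -/
def SNormal {M : Type*} [Monoid M] (S : Set M) (L : List M) : Prop :=
  ∀ i : ℕ, i + 1 < L.length → ∀ s ∈ S, ∀ f : M,
    LDvd s (f * L.getD i 1 * L.getD (i + 1) 1) → LDvd s (f * L.getD i 1)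

/-- `S` is a Garside family in `M` if `1 ∈ S` and every element of `M` admits an
`S`-normal decomposition. -/
def GarsideFamily {M : Type*} [Monoid M] (S : Set M) : Prop :=
  (1 : M) ∈ S ∧ ∀ g : M, ∃ L : List M, (∀ x ∈ L, x ∈ S) ∧ SNormal S L ∧ L.prod = g

section

variable {M : Type*} [Monoid M]

theorem LDvd.antisymm [IsLeftCancelMul M] [Subsingleton Mˣ] {a b : M}
    (hab : LDvd a b) (hba : LDvd b a) : a = b := by
  obtain ⟨c, rfl⟩ := hab
  obtain ⟨d, hd⟩ := hba
  have hcd : c * d = 1 := mul_eq_left.mp (by rw [← mul_assoc, hd])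
  rw [(IsUnit.of_mul_eq_one d hcd).eq_one, mul_one]

theorem List.eq_nil_of_prod_eq_one [IsDedekindFiniteMonoid M] [Subsingleton Mˣ] {L : List M}
    (hlast : L.getLast? ≠ some 1) (hprod : L.prod = 1) : L = [] := by
  rcases L.eq_nil_or_concat' with rfl | ⟨l, t, rfl⟩
  · rfl
  · rw [List.prod_append, List.prod_singleton] at hprod
    exact (hlast (by simp [(IsUnit.of_mul_eq_one_right _ hprod).eq_one])).elim

variable {S : Set M}

theorem SNormal.tail {a : M} {L : List M} (h : SNormal S (a :: L)) : SNormal S L :=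
  fun i hi s hs f => by simpa using h (i + 1) (by simpa using hi) s hs f

theorem SNormal.ldvd_mul_head {a s f : M} {L : List M} (hL : SNormal S (a :: L)) (hs : s ∈ S)
    (h : LDvd s (f * (a :: L).prod)) : LDvd s (f * a) := by
  induction L generalizing a f with
  | nil => simpa using h
  | cons b L ih =>
    have hfab : LDvd s (f * a * b) := ih hL.tail (by simpa [mul_assoc] using h)
    simpa using hL 0 (by simp) s hs f (by simpa using hfab)

theorem SNormal.ldvd_head {a s : M} {L : List M} (hL : SNormal S (a :: L)) (hs : s ∈ S)
    (h : LDvd s (a :: L).prod) : LDvd s a := by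
  simpa using hL.ldvd_mul_head (f := 1) hs (by simpa using h)

def StrictSNormal (S : Set M) (L : List M) : Prop :=
  (∀ x ∈ L, x ∈ S) ∧ SNormal S L ∧ L.getLast? ≠ some 1

theorem StrictSNormal.tail {a : M} {L : List M} (h : StrictSNormal S (a :: L)) :
    StrictSNormal S L := by
  obtain ⟨hS, hN, hlast⟩ := h
  refine ⟨fun x hx => hS x (List.mem_cons_of_mem a hx), hN.tail, ?_⟩
  cases L with
  | nil => simp
  | cons b L => simpa using hlast

theorem StrictSNormal.eq_of_prod_eq [IsLeftCancelMul M] [Subsingleton Mˣ] {L₁ L₂ : List M}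
    (h₁ : StrictSNormal S L₁) (h₂ : StrictSNormal S L₂) (h : L₁.prod = L₂.prod) : L₁ = L₂ := by
  induction L₁ generalizing L₂ with
  | nil => exact (List.eq_nil_of_prod_eq_one h₂.2.2 (by simpa using h.symm)).symm
  | cons a l ih =>
    cases L₂ with
    | nil => exact List.eq_nil_of_prod_eq_one h₁.2.2 (by simpa using h)
    | cons b l₂ =>
      have hba : LDvd b a :=
        h₁.2.1.ldvd_head (h₂.1 b (by simp)) ⟨l₂.prod, by rw [h, List.prod_cons]⟩
      have hab : LDvd a b :=
        h₂.2.1.ldvd_head (h₁.1 a (by simp)) ⟨l.prod, by rw [← h, List.prod_cons]⟩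
      obtain rfl := hab.antisymm hba
      rw [List.prod_cons, List.prod_cons, mul_left_cancel_iff] at h
      rw [ih h₁.tail h₂.tail h]

end

/-- If `M` is a left-cancellative monoid whose only invertible element
is `1` and `S ⊆ M`, then every element of `M` admits at most one strict `S`-normal
decomposition. -/
theorem strict_sNormal_decomposition_unique {M : Type*} [Monoid M]
    (hcan : ∀ a b c : M, a * b = a * c → b = c)
    (hunit : ∀ a : M, IsUnit a → a = 1)
    (S : Set M) (g : M) (L₁ L₂ : List M)
    (h₁ : (∀ x ∈ L₁, x ∈ S) ∧ SNormal S L₁ ∧ L₁.getLast? ≠ some 1 ∧ L₁.prod = g)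
    (h₂ : (∀ x ∈ L₂, x ∈ S) ∧ SNormal S L₂ ∧ L₂.getLast? ≠ some 1 ∧ L₂.prod = g) :
    L₁ = L₂ := by
  have : IsLeftCancelMul M := ⟨fun a _ _ => hcan a _ _⟩
  have := Subsingleton.units_of_isUnit hunit
  obtain ⟨hS₁, hN₁, hlast₁, rfl⟩ := h₁
  obtain ⟨hS₂, hN₂, hlast₂, hprod⟩ := h₂
  exact StrictSNormal.eq_of_prod_eq ⟨hS₁, hN₁, hlast₁⟩ ⟨hS₂, hN₂, hlast₂⟩ hprod.symm
end

section
/- If M is a left-cancellative monoid whose only invertible element is 1 and S is a Garside family in M, then the left domino rule is valid for S-normal words of length two: whenever s_1, s_2, s'_1, s'_2, t_0, t_1, t_2 lie in S and satisfy s'_1 t_1 = t_0 s_1 and s'_2 t_2 = t_1 s_2 in M, if the words s_1|s_2, s'_1|t_1 and s'_2|t_2 are S-normal, then s'_1|s'_2 is S-normal. -/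
theorem lDvd_iff_dvd {M : Type*} [Monoid M] {f g : M} : LDvd f g ↔ f ∣ g :=
  exists_congr fun _ => eq_comm

theorem sNormal_pair_iff {M : Type*} [Monoid M] {S : Set M} {a b : M} :
    SNormal S [a, b] ↔ ∀ s ∈ S, ∀ f : M, s ∣ f * a * b → s ∣ f * a := by
  simp only [SNormal, lDvd_iff_dvd]
  refine ⟨fun h => h 0 (by simp), fun h i hi => ?_⟩
  obtain rfl : i = 0 := by simp at hi; omega
  exact h

theorem garsideFamily_left_domino_rule_general {M : Type*} [Monoid M]
    (S : Set M)
    (s₁ s₂ s₁' s₂' t₀ t₁ t₂ : M)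
    (e₁ : s₁' * t₁ = t₀ * s₁) (e₂ : s₂' * t₂ = t₁ * s₂)
    (n₁ : SNormal S [s₁, s₂]) (n₂ : SNormal S [s₁', t₁]) :
    SNormal S [s₁', s₂'] := by
  rw [sNormal_pair_iff] at n₁ n₂ ⊢
  intro s hs f hdvd
  have hdvd_long : s ∣ f * t₀ * s₁ * s₂ :=
    calc s ∣ f * s₁' * s₂' * t₂ := hdvd.mul_right t₂
      _ = f * t₀ * s₁ * s₂ := by simp only [mul_assoc, e₂, ← e₁]
  have hdvd_mid : s ∣ f * s₁' * t₁ := by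
    simpa only [mul_assoc, e₁] using n₁ s hs (f * t₀) hdvd_long
  exact n₂ s hs f hdvd_mid

/-- If `M` is a left-cancellative monoid whose only invertible element
is `1` and `S` is a Garside family in `M`, then the left domino rule is valid for
`S`-normal words of length two. -/
theorem garsideFamily_left_domino_rule {M : Type*} [Monoid M]
    (hcan : ∀ a b c : M, a * b = a * c → b = c)
    (hunit : ∀ a : M, IsUnit a → a = 1)
    (S : Set M) (hS : GarsideFamily S)
    (s₁ s₂ s₁' s₂' t₀ t₁ t₂ : M)
    (ms₁ : s₁ ∈ S) (ms₂ : s₂ ∈ S) (ms₁' : s₁' ∈ S) (ms₂' : s₂' ∈ S)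
    (mt₀ : t₀ ∈ S) (mt₁ : t₁ ∈ S) (mt₂ : t₂ ∈ S)
    (e₁ : s₁' * t₁ = t₀ * s₁) (e₂ : s₂' * t₂ = t₁ * s₂)
    (n₁ : SNormal S [s₁, s₂]) (n₂ : SNormal S [s₁', t₁]) (n₃ : SNormal S [s₂', t₂]) :
    SNormal S [s₁', s₂'] :=
  garsideFamily_left_domino_rule_general S s₁ s₂ s₁' s₂' t₀ t₁ t₂ e₁ e₂ n₁ n₂
end

section
/- If (S, N) is a quadratic normalisation of class (4, 3), then for every word w of length p ≥ 2 over S one has N(w) = N̄_{δ_p}(w), where δ_p is defined inductively by δ_2 := 1 and δ_p := sh(δ_{p−1})|1|2|…|p−1, with sh shifting every entry of the sequence by +1. -/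
/-- A normalisation `(S, N)`: a length-preserving map `N : S* → S*` fixing the letters
and compatible with itself on factors. -/
structure Normalisation (S : Type*) where
  /-- The normalisation map. -/
  N : List S → List S
  length_eq : ∀ w : List S, (N w).length = w.length
  single : ∀ s : S, N [s] = [s]
  compat : ∀ u w v : List S, N (u ++ N w ++ v) = N (u ++ w ++ v)

/-- The restriction `N̄` of `N` to length-two words, as a map on pairs. -/
def Normalisation.pair {S : Type*} (Q : Normalisation S) (p : S × S) : S × S :=
  match Q.N [p.1, p.2] with
  | [a, b] => (a, b)
  | _ => p

/-- Apply `F` to the entries at (1-based) positions `i, i+1` of a word. -/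
def applyAt {α : Type*} (F : α × α → α × α) : ℕ → List α → List α
  | 1, a :: b :: t => (F (a, b)).1 :: (F (a, b)).2 :: t
  | n + 2, a :: t => a :: applyAt F (n + 1) t
  | _, l => l

/-- Apply `F` successively at the positions listed in `u` (leftmost entry first):
`F_u = F_{i_n} ∘ ⋯ ∘ F_{i_1}` for `u = i_1|…|i_n`. -/
def applySeq {α : Type*} (F : α × α → α × α) (u : List ℕ) (w : List α) : List α :=
  u.foldl (fun v i => applyAt F i v) w

/-- `altSeq s m` is the alternating sequence of `1`s and `2`s of length `m` starting
with `s`: `altSeq 1 m = 121⋯[m]` and `altSeq 2 m = 212⋯[m]`. -/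
def altSeq : ℕ → ℕ → List ℕ
  | _, 0 => []
  | s, m + 1 => s :: altSeq (3 - s) m

/-- A normalisation is quadratic if (i) a word is `N`-normal iff all its length-two
factors are, and (ii) `N(w)` is always obtained by applying `N̄` at finitely many
positions. -/
def Normalisation.Quadratic {S : Type*} (Q : Normalisation S) : Prop :=
  (∀ w : List S, Q.N w = w ↔
    ∀ u v : List S, ∀ a b : S, w = u ++ [a, b] ++ v → Q.N [a, b] = [a, b]) ∧
  (∀ w : List S, ∃ u : List ℕ, Q.N w = applySeq Q.pair u w)

/-- `(S, N)` is of left class `c`: `N(w) = N̄_{121⋯[c]}(w)` for every length-3 word. -/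
def Normalisation.LeftClass {S : Type*} (Q : Normalisation S) (c : ℕ) : Prop :=
  ∀ w : List S, w.length = 3 → Q.N w = applySeq Q.pair (altSeq 1 c) w

/-- `(S, N)` is of right class `c`: `N(w) = N̄_{212⋯[c]}(w)` for every length-3 word. -/
def Normalisation.RightClass {S : Type*} (Q : Normalisation S) (c : ℕ) : Prop :=
  ∀ w : List S, w.length = 3 → Q.N w = applySeq Q.pair (altSeq 2 c) w

/-- The sequence of positions `δ_p`: `δ_2 = 1` and `δ_p = sh(δ_{p−1})|1|2|…|p−1`,
where `sh` shifts every entry by `+1`. -/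
def deltaSeq : ℕ → List ℕ
  | 0 => []
  | p + 1 => (deltaSeq p).map (· + 1) ++ (List.range p).map (· + 1)

/-!
Every step `N̄_i` leaves `N` unchanged, so it suffices to show that `N̄_{δ_p}(w)` is normal,
i.e. (by quadraticity) that all its length-two factors are normal. Write `w = a v`: by induction
`N̄_{sh(δ_{p−1})}` turns `w` into `a v'` with `v'` normal, and the sweep `N̄_{1|2|…|p−1}` then
pushes `a` through `v'`. Right class `3` yields the domino rule: if `b c` is normal and `N̄` turns
`a b` into `a' b'` and `b' c` into `b'' c'`, then `a' b''` is normal. Hence each new factor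
created by the sweep is normal.
-/

section ApplySeq

variable {α : Type*} (F : α × α → α × α)

lemma applyAt_length : ∀ (i : ℕ) (w : List α), (applyAt F i w).length = w.length
  | 1, _ :: _ :: _ => rfl
  | n + 2, _ :: t => congrArg Nat.succ (applyAt_length (n + 1) t)
  | 0, _ | 1, [] | 1, [_] | _ + 2, [] => rfl

lemma applySeq_length (u : List ℕ) (w : List α) : (applySeq F u w).length = w.length := by
  induction u generalizing w with
  | nil => rfl
  | cons i u ih => exact (ih _).trans (applyAt_length F i w)

lemma applySeq_cons (i : ℕ) (u : List ℕ) (w : List α) :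
    applySeq F (i :: u) w = applySeq F u (applyAt F i w) :=
  rfl

lemma applySeq_append (u v : List ℕ) (w : List α) :
    applySeq F (u ++ v) w = applySeq F v (applySeq F u w) :=
  List.foldl_append

lemma applySeq_map_succ_cons {u : List ℕ} (hu : ∀ i ∈ u, 0 < i) (a : α) (w : List α) :
    applySeq F (u.map (· + 1)) (a :: w) = a :: applySeq F u w := by
  induction u generalizing w with
  | nil => rfl
  | cons i u ih =>
    obtain ⟨j, rfl⟩ := Nat.exists_eq_add_of_lt (hu i List.mem_cons_self)
    exact ih (fun k hk => hu k (List.mem_cons_of_mem _ hk)) _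

lemma applySeq_range'_cons_cons (n : ℕ) (a b : α) (t : List α) :
    applySeq F (List.range' 1 (n + 1)) (a :: b :: t) =
      (F (a, b)).1 :: applySeq F (List.range' 1 n) ((F (a, b)).2 :: t) := by
  have hshift : List.range' 2 n = (List.range' 1 n).map (· + 1) := by
    simp [List.range'_eq_map_range, Function.comp_def, Nat.add_comm, Nat.add_left_comm]
  rw [List.range'_succ, hshift, applySeq_cons]
  exact applySeq_map_succ_cons F (fun i hi => (List.mem_range'_1.mp hi).1) _ _

end ApplySeq

lemma deltaSeq_succ (p : ℕ) :
    deltaSeq (p + 1) = (deltaSeq p).map (· + 1) ++ List.range' 1 p := by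
  simp [deltaSeq, List.range'_eq_map_range, Nat.add_comm]

lemma pos_of_mem_deltaSeq : ∀ {p i : ℕ}, i ∈ deltaSeq p → 0 < i
  | p + 1, i, h => by
    simp only [deltaSeq, List.mem_append, List.mem_map] at h
    omega

namespace Normalisation

variable {S : Type*} (Q : Normalisation S)

def NormalPair (a b : S) : Prop :=
  Q.N [a, b] = [a, b]

lemma N_idem (w : List S) : Q.N (Q.N w) = Q.N w := by
  simpa using Q.compat [] w []

lemma N_pair_eq (a b : S) : Q.N [a, b] = [(Q.pair (a, b)).1, (Q.pair (a, b)).2] := by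
  have hlen := Q.length_eq [a, b]
  unfold pair
  match Q.N [a, b], hlen with
  | [_, _], _ => rfl

lemma pair_eq_self {a b : S} (h : Q.NormalPair a b) : Q.pair (a, b) = (a, b) := by
  unfold pair
  rw [show Q.N [a, b] = [a, b] from h]

lemma normalPair_pair (a b : S) : Q.NormalPair (Q.pair (a, b)).1 (Q.pair (a, b)).2 := by
  rw [NormalPair, ← N_pair_eq, N_idem]

lemma N_applyAt : ∀ (i : ℕ) (w : List S), Q.N (applyAt Q.pair i w) = Q.N w
  | 1, a :: b :: t => by
    simpa [applyAt, N_pair_eq] using Q.compat [] [a, b] t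
  | n + 2, a :: t => by
    have hcongr := Q.compat [a] (applyAt Q.pair (n + 1) t) []
    rw [N_applyAt (n + 1) t, Q.compat] at hcongr
    simpa [applyAt] using hcongr.symm
  | 0, _ | 1, [] | 1, [_] | _ + 2, [] => rfl

lemma N_applySeq (u : List ℕ) (w : List S) : Q.N (applySeq Q.pair u w) = Q.N w := by
  induction u generalizing w with
  | nil => rfl
  | cons i u ih => exact (ih _).trans (Q.N_applyAt i w)

variable {Q}

lemma Quadratic.N_eq_self_iff (hQ : Q.Quadratic) (w : List S) :
    Q.N w = w ↔ w.IsChain Q.NormalPair := by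
  rw [hQ.1, List.isChain_iff_forall_rel_of_append_cons_cons]
  exact ⟨fun h a b u v hw => h u v a b (by simpa using hw),
    fun h u v a b hw => h (by simpa using hw)⟩

lemma RightClass.normalPair_domino (hQ : Q.Quadratic) (h3 : Q.RightClass 3) {b c : S}
    (hbc : Q.NormalPair b c) (a : S) :
    Q.NormalPair (Q.pair (a, b)).1 (Q.pair ((Q.pair (a, b)).2, c)).1 := by
  have hN : Q.N [a, b, c] = [(Q.pair (a, b)).1, (Q.pair ((Q.pair (a, b)).2, c)).1,
      (Q.pair ((Q.pair (a, b)).2, c)).2] := by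
    rw [h3 [a, b, c] rfl]
    simp [applySeq, altSeq, applyAt, Q.pair_eq_self hbc]
  have hnormal := (hQ.N_eq_self_iff _).mp (hN ▸ Q.N_idem [a, b, c])
  exact (List.isChain_cons_cons.mp hnormal).1

lemma Quadratic.isChain_applySeq_range'_cons (hQ : Q.Quadratic) (h3 : Q.RightClass 3) (a : S)
    {v : List S} (hv : v.IsChain Q.NormalPair) :
    (applySeq Q.pair (List.range' 1 v.length) (a :: v)).IsChain Q.NormalPair := by
  induction v generalizing a with
  | nil => exact List.isChain_singleton a
  | cons b t ih =>
    rw [List.length_cons, applySeq_range'_cons_cons]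
    cases t with
    | nil => exact List.isChain_pair.mpr (Q.normalPair_pair a b)
    | cons c t =>
      have hbc := (List.isChain_cons_cons.mp hv).1
      have htail := ih (Q.pair (a, b)).2 (List.isChain_cons_cons.mp hv).2
      rw [List.length_cons, applySeq_range'_cons_cons] at htail ⊢
      exact List.isChain_cons_cons.mpr ⟨h3.normalPair_domino hQ hbc a, htail⟩

lemma Quadratic.isChain_applySeq_deltaSeq (hQ : Q.Quadratic) (h3 : Q.RightClass 3) :
    ∀ w : List S, (applySeq Q.pair (deltaSeq w.length) w).IsChain Q.NormalPair
  | [] => List.IsChain.nil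
  | a :: v => by
    have hv := hQ.isChain_applySeq_deltaSeq h3 v
    rw [List.length_cons, deltaSeq_succ, applySeq_append,
      applySeq_map_succ_cons _ (fun _ => pos_of_mem_deltaSeq)]
    simpa only [applySeq_length] using hQ.isChain_applySeq_range'_cons h3 a hv

end Normalisation

theorem quadratic_class43_deltaSeq_recipe_general {S : Type*} (Q : Normalisation S)
    (hQ : Q.Quadratic) (h3 : Q.RightClass 3)
    (w : List S) :
    Q.N w = applySeq Q.pair (deltaSeq w.length) w := by
  have hnormal := (hQ.N_eq_self_iff _).mpr (hQ.isChain_applySeq_deltaSeq h3 w)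
  rw [← hnormal, Q.N_applySeq]

/-- If `(S, N)` is a quadratic normalisation of class `(4, 3)`, then
`N(w) = N̄_{δ_p}(w)` for every word `w` of length `p ≥ 2`. -/
theorem quadratic_class43_deltaSeq_recipe {S : Type*} (Q : Normalisation S)
    (hQ : Q.Quadratic) (h4 : Q.LeftClass 4) (h3 : Q.RightClass 3)
    (w : List S) (hp : 2 ≤ w.length) :
    Q.N w = applySeq Q.pair (deltaSeq w.length) w :=
  quadratic_class43_deltaSeq_recipe_general Q hQ h3 w
end
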